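/- Let (X, Σ) be a measurable space, H a Hilbert space over 𝕜, and let Φ₀ be a map from the bounded measurable functions X → 𝕜 to the bounded linear operators on H which is a unital *-homomorphism (linear, multiplicative, Φ₀(1) = I, Φ₀(f̄) = Φ₀(f)*) and weakly bp-continuous (if f_n → f pointwise with sup_n ‖f_n‖_∞ < ∞ then Φ₀(f_n) → Φ₀(f) in the weak operator topology). Then Φ₀ extends uniquely to a measurable functional calculus Φ on (X, Σ), i.e. there is exactly one map Φ from all measurable functions X → 𝕜 to closed operators in H satisfying (MFC1)–(MFC5) with Φ(f) = Φ₀(f) for every bounded measurable f. -/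

import Mathlib

open scoped Topology

noncomputable section

/-- Composition `S ∘ T` of partially defined linear operators, with domain
`{x ∈ dom T | T x ∈ dom S}`. -/
noncomputable def LinearPMap.compP {R E : Type*} [Ring R] [AddCommGroup E] [Module R E]
    (S T : E →ₗ.[R] E) : E →ₗ.[R] E where
  domain := (S.domain.comap T.toFun).map T.domain.subtype
  toFun := S.toFun.comp <| LinearMap.codRestrict S.domain
      (T.toFun.comp (Submodule.inclusion (Submodule.map_subtype_le _ _)))
      (fun x => by
        obtain ⟨y, hy, hyx⟩ := Submodule.mem_map.mp x.2
        have hxy : Submodule.inclusion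
            (Submodule.map_subtype_le T.domain (S.domain.comap T.toFun)) x = y := by
          apply Subtype.ext
          simpa using hyx.symm
        rw [LinearMap.comp_apply, hxy]
        exact hy)

/-- A measurable functional calculus on a measurable space `X`, with values in
closed partially defined operators on a Hilbert space `H` over `𝕜`. -/
structure MeasFC (X : Type*) [MeasurableSpace X] (𝕜 : Type*) [RCLike 𝕜]
    (H : Type*) [NormedAddCommGroup H] [InnerProductSpace 𝕜 H] [CompleteSpace H] where
  ap : (X → 𝕜) → (H →ₗ.[𝕜] H)
  isClosed : ∀ f : X → 𝕜, Measurable f → (ap f).IsClosed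
  mfc1 : ap (fun _ => 1) = (LinearMap.id : H →ₗ[𝕜] H).toPMap ⊤
  mfc2_add : ∀ f g : X → 𝕜, Measurable f → Measurable g → ap f + ap g ≤ ap (f + g)
  mfc2_smul : ∀ (c : 𝕜) (f : X → 𝕜), Measurable f → c • ap f ≤ ap (fun x => c * f x)
  mfc3_le : ∀ f g : X → 𝕜, Measurable f → Measurable g → (ap f).compP (ap g) ≤ ap (f * g)
  mfc3_dom : ∀ f g : X → 𝕜, Measurable f → Measurable g →
      ((ap f).compP (ap g)).domain = (ap g).domain ⊓ (ap (f * g)).domain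
  mfc4_dom : ∀ f : X → 𝕜, Measurable f → (∃ C, ∀ x, ‖f x‖ ≤ C) → (ap f).domain = ⊤
  mfc4_cont : ∀ f : X → 𝕜, Measurable f → (∃ C, ∀ x, ‖f x‖ ≤ C) →
      Continuous fun x : (ap f).domain => ap f x
  mfc4_star : ∀ f : X → 𝕜, Measurable f → (∃ C, ∀ x, ‖f x‖ ≤ C) →
      (ap f).adjoint = ap (fun x => starRingEnd 𝕜 (f x))
  mfc5 : ∀ (f : ℕ → X → 𝕜) (g : X → 𝕜), (∀ n, Measurable (f n)) → Measurable g →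
      (∃ C, ∀ n x, ‖f n x‖ ≤ C) →
      (∀ x, Filter.Tendsto (fun n => f n x) Filter.atTop (𝓝 (g x))) →
      ∀ (x y : H) (hn : ∀ n, x ∈ (ap (f n)).domain) (hg : x ∈ (ap g).domain),
        Filter.Tendsto (fun n => (inner 𝕜 (ap (f n) ⟨x, hn n⟩) y : 𝕜)) Filter.atTop
          (𝓝 (inner 𝕜 (ap g ⟨x, hg⟩) y))

/-- `B` is a `Φ`-null set: `Φ(𝟏_B) = 0`. -/
def MeasFC.IsNull {X : Type*} [MeasurableSpace X] {𝕜 : Type*} [RCLike 𝕜]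
    {H : Type*} [NormedAddCommGroup H] [InnerProductSpace 𝕜 H] [CompleteSpace H]
    (Φ : MeasFC X 𝕜 H) (B : Set X) : Prop :=
  Φ.ap (B.indicator fun _ => 1) = (0 : H →ₗ[𝕜] H).toPMap ⊤


variable {𝕜 : Type*} [RCLike 𝕜] {X : Type*} [MeasurableSpace X]
  {H : Type*} [NormedAddCommGroup H] [InnerProductSpace 𝕜 H] [CompleteSpace H]

/-! With `Bₙ = {‖f‖ ≤ n}`, `Φ(f)` is the strong limit of `Φ₀(1_{Bₙ} f)`, defined where it
exists. The `Φ₀(1_{Bₙ})` are orthogonal projections and `Φ₀(1_{Bₙ} f) = Φ₀(1_{Bₙ}) Φ₀(1_{Bₘ} f)`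
for `n ≤ m`, so by Pythagoras the limit exists as soon as the sequence is bounded. The identity
`‖Φ₀(g) x‖² = ⟪Φ₀(|g|²) x, x⟫` upgrades weak to strong bp-continuity, which gives
`Φ₀(h f) x = Φ₀(h) Φ(f) x` whenever `h` and `h f` are bounded. Hence the `Bₙ` may be replaced by
any measurable exhaustion on whose members `f` is bounded, and exhaustions adapted to two functions
at once give (MFC2) and (MFC3). The graph of `Φ(f)` is
`{(x, z) | ∀ n, Φ₀(1_{Bₙ} f) x = Φ₀(1_{Bₙ}) z}`, hence closed. A calculus `Ψ` extending `Φ₀`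
satisfies these equations on its graph by (MFC3); conversely (MFC3) puts
`(Φ₀(1_{Bₙ}) x, Φ₀(1_{Bₙ}) z)` in the closed graph of `Ψ(f)`, so `Ψ(f) = Φ(f)`. -/

open Filter

theorem Set.indicator_one_mul {α M₀ : Type*} [MulZeroOneClass M₀] (s : Set α) (f : α → M₀) :
    s.indicator 1 * f = s.indicator f := by
  ext y
  by_cases hy : y ∈ s <;> simp [hy]

theorem IsStarProjection.norm_apply_le {p : H →L[𝕜] H} (hp : IsStarProjection p) (x : H) :
    ‖p x‖ ≤ ‖x‖ := by
  simpa using p.le_of_opNorm_le hp.norm_le x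

theorem IsStarProjection.norm_sub_apply_sq {p : H →L[𝕜] H} (hp : IsStarProjection p) (x : H) :
    ‖x - p x‖ ^ 2 = ‖x‖ ^ 2 - ‖p x‖ ^ 2 := by
  obtain ⟨K, _, rfl⟩ := isStarProjection_iff_eq_starProjection.mp hp
  rw [K.norm_sq_eq_add_norm_sq_starProjection x, ← K.starProjection_orthogonal_val]
  simp

theorem cauchySeq_of_norm_sub_sq {E : Type*} [SeminormedAddCommGroup E] {s : ℕ → E}
    (hs : ∀ n m, n ≤ m → ‖s m - s n‖ ^ 2 = ‖s m‖ ^ 2 - ‖s n‖ ^ 2)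
    (hb : BddAbove (Set.range fun n => ‖s n‖)) : CauchySeq s := by
  obtain ⟨M, hM⟩ := hb
  have hmono : Monotone fun n => ‖s n‖ ^ 2 := fun n m hnm =>
    sub_nonneg.mp (hs n m hnm ▸ sq_nonneg _)
  have hsq : CauchySeq fun n => ‖s n‖ ^ 2 := by
    refine (tendsto_atTop_ciSup hmono ⟨M ^ 2, ?_⟩).cauchySeq
    rintro _ ⟨n, rfl⟩
    exact pow_le_pow_left₀ (norm_nonneg _) (hM ⟨n, rfl⟩) 2
  rw [Metric.cauchySeq_iff'] at hsq ⊢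
  intro ε hε
  obtain ⟨N, hN⟩ := hsq (ε ^ 2) (by positivity)
  refine ⟨N, fun n hn => ?_⟩
  rw [dist_eq_norm]
  refine lt_of_pow_lt_pow_left₀ 2 hε.le ?_
  rw [hs N n hn]
  exact (le_abs_self _).trans_lt (hN n hn)

namespace LinearPMap

theorem mem_graph_toPMap_top_iff {R E F : Type*} [Ring R] [AddCommGroup E] [Module R E]
    [AddCommGroup F] [Module R F] {A : E →ₗ[R] F} {x : E} {y : F} :
    (x, y) ∈ (A.toPMap ⊤).graph ↔ A x = y := by
  rw [mem_graph_iff]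
  exact ⟨fun ⟨⟨z, _⟩, hz, hzy⟩ => by simpa [← show z = x from hz] using hzy,
    fun h => ⟨⟨x, trivial⟩, rfl, h⟩⟩

section

variable {R E F : Type*} [CommRing R] [AddCommGroup E] [Module R E] [AddCommGroup F] [Module R F]

theorem mem_graph_compP_iff {S T : E →ₗ.[R] E} {x v : E} :
    (x, v) ∈ (S.compP T).graph ↔ ∃ w, (x, w) ∈ T.graph ∧ (w, v) ∈ S.graph := by
  simp only [mem_graph_iff]
  constructor
  · rintro ⟨⟨y, hy⟩, rfl, rfl⟩
    obtain ⟨z, hz, rfl⟩ := Submodule.mem_map.mp hy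
    exact ⟨T z, ⟨z, rfl, rfl⟩, ⟨⟨T z, hz⟩, rfl, rfl⟩⟩
  · rintro ⟨w, ⟨z, hzx, rfl⟩, ⟨u, huz, rfl⟩⟩
    subst hzx
    refine ⟨⟨z, z, ?_, rfl⟩, rfl, ?_⟩
    · exact (congrArg (· ∈ S.domain) huz).mp u.2
    · show S _ = S u
      congr 1
      exact Subtype.ext huz.symm

theorem add_le_of_mem_graph {f g h : E →ₗ.[R] F}
    (hfg : ∀ x v w, (x, v) ∈ f.graph → (x, w) ∈ g.graph → (x, v + w) ∈ h.graph) : f + g ≤ h := by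
  refine le_of_le_graph fun ⟨x, y⟩ hp => ?_
  obtain ⟨z, rfl, rfl⟩ := (mem_graph_iff _).mp hp
  exact hfg _ _ _ (f.mem_graph ⟨z, z.2.1⟩) (g.mem_graph ⟨z, z.2.2⟩)

theorem smul_le_of_mem_graph {f g : E →ₗ.[R] F} (c : R)
    (hfg : ∀ x v, (x, v) ∈ f.graph → (x, c • v) ∈ g.graph) : c • f ≤ g := by
  refine le_of_le_graph fun ⟨x, y⟩ hp => ?_
  obtain ⟨z, rfl, rfl⟩ := (mem_graph_iff _).mp hp
  exact hfg _ _ (f.mem_graph z)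

end

section

variable {R E F : Type*} [Ring R] [AddCommGroup E] [Module R E] [AddCommGroup F] [Module R F]
  [TopologicalSpace F] [T2Space F] [ContinuousAdd F] [ContinuousConstSMul R F]

def strongLimit (T : ℕ → E →ₗ[R] F) : E →ₗ.[R] F where
  domain :=
    { carrier := {x | ∃ v, Tendsto (fun n => T n x) atTop (𝓝 v)}
      add_mem' := by
        rintro x y ⟨v, hv⟩ ⟨w, hw⟩
        exact ⟨v + w, by simpa only [LinearMap.map_add] using hv.add hw⟩
      zero_mem' := ⟨0, by simpa only [LinearMap.map_zero] using tendsto_const_nhds⟩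
      smul_mem' := by
        rintro c x ⟨v, hv⟩
        exact ⟨c • v, by simpa only [LinearMap.map_smul] using hv.const_smul c⟩ }
  toFun :=
    { toFun := fun x => limUnder atTop fun n => T n x
      map_add' := fun x y => tendsto_nhds_unique (tendsto_nhds_limUnder (x + y).2) <| by
        simpa only [Submodule.coe_add, LinearMap.map_add] using
          (tendsto_nhds_limUnder x.2).add (tendsto_nhds_limUnder y.2)
      map_smul' := fun c x => tendsto_nhds_unique (tendsto_nhds_limUnder (c • x).2) <| by
        simpa only [Submodule.coe_smul, LinearMap.map_smul, RingHom.id_apply] using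
          (tendsto_nhds_limUnder x.2).const_smul c }

theorem mem_graph_strongLimit_iff {T : ℕ → E →ₗ[R] F} {x : E} {v : F} :
    (x, v) ∈ (strongLimit T).graph ↔ Tendsto (fun n => T n x) atTop (𝓝 v) := by
  rw [mem_graph_iff]
  constructor
  · rintro ⟨⟨y, hy⟩, rfl, rfl⟩
    exact tendsto_nhds_limUnder hy
  · intro hv
    exact ⟨⟨x, v, hv⟩, rfl, tendsto_nhds_unique (tendsto_nhds_limUnder ⟨v, hv⟩) hv⟩

end

end LinearPMap

def NormBounded {α E : Type*} [Norm E] (f : α → E) : Prop :=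
  ∃ C, ∀ x, ‖f x‖ ≤ C

section NormBounded

variable {α E : Type*} [SeminormedAddCommGroup E] {f g : α → E}

theorem normBounded_const (c : E) : NormBounded fun _ : α => c :=
  ⟨‖c‖, fun _ => le_rfl⟩

theorem NormBounded.add (hf : NormBounded f) (hg : NormBounded g) : NormBounded (f + g) :=
  let ⟨C, hC⟩ := hf; let ⟨D, hD⟩ := hg
  ⟨C + D, fun x => (norm_add_le _ _).trans (add_le_add (hC x) (hD x))⟩

theorem NormBounded.sub (hf : NormBounded f) (hg : NormBounded g) : NormBounded (f - g) :=
  let ⟨C, hC⟩ := hf; let ⟨D, hD⟩ := hg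
  ⟨C + D, fun x => (norm_sub_le _ _).trans (add_le_add (hC x) (hD x))⟩

theorem NormBounded.indicator (hf : NormBounded f) (s : Set α) : NormBounded (s.indicator f) :=
  let ⟨C, hC⟩ := hf
  ⟨C, fun x => (norm_indicator_le_norm_self f x).trans (hC x)⟩

theorem NormBounded.exists_bound_indicator (hf : NormBounded f) (A : ℕ → Set α) :
    ∃ C, ∀ n x, ‖(A n).indicator f x‖ ≤ C :=
  let ⟨C, hC⟩ := hf
  ⟨C, fun _ x => (norm_indicator_le_norm_self f x).trans (hC x)⟩

theorem normBounded_indicator_of_le {s : Set α} {C : ℝ} (hC : ∀ x ∈ s, ‖f x‖ ≤ C) :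
    NormBounded (s.indicator f) := by
  refine ⟨max C 0, fun x => ?_⟩
  by_cases hx : x ∈ s
  · simpa [hx] using le_max_of_le_left (hC x hx)
  · simp [hx]

theorem normBounded_of_tendsto {f : ℕ → α → E} {g : α → E} (hf : ∃ C, ∀ n x, ‖f n x‖ ≤ C)
    (hfg : ∀ x, Tendsto (fun n => f n x) atTop (𝓝 (g x))) : NormBounded g :=
  let ⟨C, hC⟩ := hf
  ⟨C, fun x => le_of_tendsto' (hfg x).norm fun n => hC n x⟩

end NormBounded

theorem normBounded_indicator_one {α : Type*} (s : Set α) :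
    NormBounded (s.indicator (1 : α → 𝕜)) :=
  (normBounded_const (1 : 𝕜)).indicator s

theorem NormBounded.conj {α : Type*} {f : α → 𝕜} (hf : NormBounded f) :
    NormBounded fun x => starRingEnd 𝕜 (f x) :=
  let ⟨C, hC⟩ := hf
  ⟨C, fun x => by simpa using hC x⟩

theorem Measurable.conj {f : X → 𝕜} (hf : Measurable f) :
    Measurable fun x => starRingEnd 𝕜 (f x) :=
  RCLike.continuous_conj.measurable.comp hf

structure IsExhaustion (A : ℕ → Set X) : Prop where
  measurableSet : ∀ n, MeasurableSet (A n)
  eventually_mem : ∀ x, ∀ᶠ n in atTop, x ∈ A n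

theorem isExhaustion_univ : IsExhaustion fun _ => (Set.univ : Set X) :=
  ⟨fun _ => MeasurableSet.univ, fun _ => Eventually.of_forall fun _ => trivial⟩

theorem IsExhaustion.inter {A B : ℕ → Set X} (hA : IsExhaustion A) (hB : IsExhaustion B) :
    IsExhaustion fun n => A n ∩ B n :=
  ⟨fun n => (hA.measurableSet n).inter (hB.measurableSet n),
    fun x => (hA.eventually_mem x).and (hB.eventually_mem x)⟩

theorem IsExhaustion.tendsto_indicator {A : ℕ → Set X} (hA : IsExhaustion A) {M : Type*} [Zero M]
    [TopologicalSpace M] (g : X → M) (x : X) :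
    Tendsto (fun n => (A n).indicator g x) atTop (𝓝 (g x)) :=
  tendsto_const_nhds.congr' <|
    (hA.eventually_mem x).mono fun _ hn => (Set.indicator_of_mem hn g).symm

def truncSet {α E : Type*} [Norm E] (f : α → E) (n : ℕ) : Set α :=
  {x | ‖f x‖ ≤ n}

section truncSet

variable {α E : Type*} [SeminormedAddCommGroup E]

theorem truncSet_mono (f : α → E) : Monotone (truncSet f) :=
  fun _ _ hnm => Set.ofPred_subset_ofPred.mpr fun _ hx => hx.trans (Nat.cast_le.mpr hnm)

theorem isExhaustion_truncSet {f : X → 𝕜} (hf : Measurable f) : IsExhaustion (truncSet f) where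
  measurableSet _ := measurableSet_le hf.norm measurable_const
  eventually_mem x :=
    let ⟨N, hN⟩ := exists_nat_ge ‖f x‖
    eventually_atTop.mpr ⟨N, fun _ hn => hN.trans (Nat.cast_le.mpr hn)⟩

theorem normBounded_indicator_truncSet {f : α → E} (n : ℕ) :
    NormBounded ((truncSet f n).indicator f) :=
  normBounded_indicator_of_le fun _ hx => hx

theorem normBounded_indicator_inter_truncSet_left (f g : α → E) (n : ℕ) :
    NormBounded ((truncSet f n ∩ truncSet g n).indicator f) :=
  normBounded_indicator_of_le fun _ hx => hx.1

theorem normBounded_indicator_inter_truncSet_right (f g : α → E) (n : ℕ) :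
    NormBounded ((truncSet f n ∩ truncSet g n).indicator g) :=
  normBounded_indicator_of_le fun _ hx => hx.2

end truncSet

/-- A weakly bp-continuous unital `*`-homomorphism from the bounded measurable functions on `X`
to the bounded operators on `H`. -/
structure BddMeasFC (X : Type*) [MeasurableSpace X] (𝕜 : Type*) [RCLike 𝕜]
    (H : Type*) [NormedAddCommGroup H] [InnerProductSpace 𝕜 H] [CompleteSpace H] where
  toFun : (X → 𝕜) → (H →L[𝕜] H)
  map_one : toFun (fun _ => 1) = 1
  map_add : ∀ f g : X → 𝕜, Measurable f → NormBounded f → Measurable g → NormBounded g →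
    toFun (f + g) = toFun f + toFun g
  map_const_mul : ∀ (c : 𝕜) (f : X → 𝕜), Measurable f → NormBounded f →
    toFun (fun x => c * f x) = c • toFun f
  map_mul : ∀ f g : X → 𝕜, Measurable f → NormBounded f → Measurable g → NormBounded g →
    toFun (f * g) = toFun f * toFun g
  map_conj : ∀ f : X → 𝕜, Measurable f → NormBounded f →
    toFun (fun x => starRingEnd 𝕜 (f x)) = ContinuousLinearMap.adjoint (toFun f)
  tendsto_inner : ∀ (f : ℕ → X → 𝕜) (g : X → 𝕜), (∀ n, Measurable (f n)) → Measurable g →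
    (∃ C, ∀ n x, ‖f n x‖ ≤ C) → (∀ x, Tendsto (fun n => f n x) atTop (𝓝 (g x))) →
    ∀ x y : H, Tendsto (fun n => inner 𝕜 (toFun (f n) x) y) atTop (𝓝 (inner 𝕜 (toFun g x) y))

namespace BddMeasFC

instance : CoeFun (BddMeasFC X 𝕜 H) fun _ => (X → 𝕜) → (H →L[𝕜] H) := ⟨toFun⟩

variable (Φ : BddMeasFC X 𝕜 H) {f g h : X → 𝕜}

theorem map_zero : Φ 0 = 0 := by
  have h := Φ.map_add 0 0 measurable_const (normBounded_const 0) measurable_const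
    (normBounded_const 0)
  rwa [add_zero, left_eq_add] at h

theorem map_sub (hf : Measurable f) (hfb : NormBounded f) (hg : Measurable g)
    (hgb : NormBounded g) : Φ (f - g) = Φ f - Φ g := by
  rw [eq_sub_iff_add_eq, ← Φ.map_add _ _ (hf.sub hg) (hfb.sub hgb) hg hgb, sub_add_cancel]

theorem inner_map_norm_sq_apply (hg : Measurable g) (hgb : NormBounded g) (x : H) :
    inner 𝕜 (Φ (fun y => (‖g y‖ : 𝕜) ^ 2) x) x = (‖Φ g x‖ : 𝕜) ^ 2 := by
  have : (fun y => (‖g y‖ : 𝕜) ^ 2) = (fun y => starRingEnd 𝕜 (g y)) * g := by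
    ext y
    simp [RCLike.conj_mul]
  rw [this, Φ.map_mul _ _ hg.conj hgb.conj hg hgb, Φ.map_conj g hg hgb,
    mul_apply_eq_comp, ContinuousLinearMap.adjoint_inner_left,
    inner_self_eq_norm_sq_to_K]

theorem tendsto_apply {f : ℕ → X → 𝕜} (hf : ∀ n, Measurable (f n)) (hg : Measurable g)
    (hC : ∃ C, ∀ n x, ‖f n x‖ ≤ C) (hfg : ∀ x, Tendsto (fun n => f n x) atTop (𝓝 (g x)))
    (x : H) : Tendsto (fun n => Φ (f n) x) atTop (𝓝 (Φ g x)) := by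
  obtain ⟨D, hD⟩ := normBounded_of_tendsto hC hfg
  obtain ⟨C, hC⟩ := hC
  have hfb : ∀ n, NormBounded (f n) := fun n => ⟨C, hC n⟩
  have hsq : Tendsto (fun n => (‖Φ (f n - g) x‖ : 𝕜) ^ 2) atTop (𝓝 0) := by
    have hlim := Φ.tendsto_inner (fun n y => (‖(f n - g) y‖ : 𝕜) ^ 2) 0
      (fun n => (RCLike.continuous_ofReal.measurable.comp ((hf n).sub hg).norm).pow_const 2)
      measurable_const
      ⟨(C + D) ^ 2, fun n y => by
        simpa using pow_le_pow_left₀ (norm_nonneg _)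
          ((norm_sub_le _ _).trans (add_le_add (hC n y) (hD y))) 2⟩
      (fun y => by
        have hsub : Tendsto (fun n => f n y - g y) atTop (𝓝 0) := by
          simpa using (hfg y).sub_const (g y)
        have h0 : Tendsto (fun z : 𝕜 => (‖z‖ : 𝕜) ^ 2) (𝓝 0) (𝓝 0) := by
          simpa using (show Continuous fun z : 𝕜 => (‖z‖ : 𝕜) ^ 2 by fun_prop).tendsto 0
        exact h0.comp hsub)
      x x
    simp only [Φ.map_zero, zero_apply, inner_zero_left] at hlim
    exact hlim.congr fun n => Φ.inner_map_norm_sq_apply ((hf n).sub hg) ((hfb n).sub ⟨D, hD⟩) x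
  rw [tendsto_iff_norm_sub_tendsto_zero]
  simp_rw [← sub_apply, ← Φ.map_sub (hf _) (hfb _) hg ⟨D, hD⟩]
  simpa using hsq.norm.sqrt

theorem isStarProjection_indicator_one {A : Set X} (hA : MeasurableSet A) :
    IsStarProjection (Φ (A.indicator 1)) := by
  have hm : Measurable (A.indicator (1 : X → 𝕜)) := measurable_one.indicator hA
  have hb := normBounded_indicator_one (𝕜 := 𝕜) A
  refine ⟨?_, ?_⟩
  · rw [IsIdempotentElem, ← Φ.map_mul _ _ hm hb hm hb, ← Set.inter_indicator_one, Set.inter_self]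
  · rw [IsSelfAdjoint, ContinuousLinearMap.star_eq_adjoint, ← Φ.map_conj _ hm hb]
    congr 1
    ext x
    by_cases hx : x ∈ A <;> simp [hx]

theorem map_indicator_one_apply {A : Set X} (hA : MeasurableSet A) (hg : Measurable g)
    (hgb : NormBounded g) (x : H) : Φ (A.indicator 1) (Φ g x) = Φ (A.indicator g) x := by
  rw [← mul_apply_eq_comp, ← Φ.map_mul _ _ (measurable_one.indicator hA)
    (normBounded_indicator_one A) hg hgb, Set.indicator_one_mul]

theorem tendsto_indicator_one_apply {A : ℕ → Set X} (hA : IsExhaustion A) (x : H) :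
    Tendsto (fun n => Φ ((A n).indicator 1) x) atTop (𝓝 x) := by
  have h := Φ.tendsto_apply (f := fun n => (A n).indicator 1) (g := fun _ => 1)
    (fun n => measurable_one.indicator (hA.measurableSet n)) measurable_const
    ((normBounded_const (1 : 𝕜)).exists_bound_indicator A) (hA.tendsto_indicator _) x
  rwa [Φ.map_one] at h

def extend (f : X → 𝕜) : H →ₗ.[𝕜] H :=
  LinearPMap.strongLimit fun n => (Φ ((truncSet f n).indicator f) : H →ₗ[𝕜] H)

theorem mem_graph_extend_iff {x v : H} :
    (x, v) ∈ (Φ.extend f).graph ↔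
      Tendsto (fun n => Φ ((truncSet f n).indicator f) x) atTop (𝓝 v) :=
  LinearPMap.mem_graph_strongLimit_iff

theorem map_mul_apply_of_mem_graph (hf : Measurable f) {x v : H}
    (hxv : (x, v) ∈ (Φ.extend f).graph) (hh : Measurable h) (hhb : NormBounded h)
    (hhf : NormBounded (h * f)) : Φ (h * f) x = Φ h v := by
  have hB := isExhaustion_truncSet hf
  have hcomp : ∀ n, Φ h (Φ ((truncSet f n).indicator f) x) =
      Φ ((truncSet f n).indicator (h * f)) x := fun n => by
    rw [← mul_apply_eq_comp, ← Φ.map_mul _ _ hh hhb (hf.indicator (hB.measurableSet n))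
      (normBounded_indicator_truncSet n)]
    congr 2
    ext y
    exact (Set.indicator_mul_right _ h f).symm
  refine tendsto_nhds_unique ?_ (((Φ h).continuous.tendsto v).comp (Φ.mem_graph_extend_iff.mp hxv))
  simp only [Function.comp_def, hcomp]
  exact Φ.tendsto_apply (fun n => (hh.mul hf).indicator (hB.measurableSet n)) (hh.mul hf)
    (hhf.exists_bound_indicator _) (hB.tendsto_indicator _) x

variable {A : ℕ → Set X}

theorem tendsto_of_mem_graph (hf : Measurable f) (hA : IsExhaustion A)
    (hAf : ∀ n, NormBounded ((A n).indicator f)) {x v : H} (hxv : (x, v) ∈ (Φ.extend f).graph) :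
    Tendsto (fun n => Φ ((A n).indicator f) x) atTop (𝓝 v) := by
  have h : ∀ n, Φ ((A n).indicator f) x = Φ ((A n).indicator 1) v := fun n => by
    rw [← Φ.map_mul_apply_of_mem_graph hf hxv (measurable_one.indicator (hA.measurableSet n))
      (normBounded_indicator_one _) (by rw [Set.indicator_one_mul]; exact hAf n),
      Set.indicator_one_mul]
  simpa only [h] using Φ.tendsto_indicator_one_apply hA v

theorem mem_domain_extend_of_bddAbove (hf : Measurable f) {x : H}
    (hx : BddAbove (Set.range fun n => ‖Φ ((truncSet f n).indicator f) x‖)) :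
    x ∈ (Φ.extend f).domain := by
  have hB := isExhaustion_truncSet hf
  have hproj : ∀ n m, n ≤ m → Φ ((truncSet f n).indicator 1) (Φ ((truncSet f m).indicator f) x) =
      Φ ((truncSet f n).indicator f) x := fun n m hnm => by
    rw [Φ.map_indicator_one_apply (hB.measurableSet n) (hf.indicator (hB.measurableSet m))
      (normBounded_indicator_truncSet m), Set.indicator_indicator,
      Set.inter_eq_left.mpr (truncSet_mono f hnm)]
  have hcauchy := cauchySeq_of_norm_sub_sq (fun n m hnm => by
    rw [← hproj n m hnm]
    exact (Φ.isStarProjection_indicator_one (hB.measurableSet n)).norm_sub_apply_sq _) hx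
  obtain ⟨v, hv⟩ := cauchySeq_tendsto_of_complete hcauchy
  exact LinearPMap.mem_domain_iff.mpr ⟨v, Φ.mem_graph_extend_iff.mpr hv⟩

theorem mem_domain_extend_of_bddAbove_indicator (hf : Measurable f) (hA : IsExhaustion A)
    (hAf : ∀ n, NormBounded ((A n).indicator f)) {x : H}
    (hx : BddAbove (Set.range fun n => ‖Φ ((A n).indicator f) x‖)) :
    x ∈ (Φ.extend f).domain := by
  obtain ⟨M, hM⟩ := hx
  refine Φ.mem_domain_extend_of_bddAbove hf ⟨M, ?_⟩
  rintro _ ⟨k, rfl⟩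
  have hBk := (isExhaustion_truncSet hf).measurableSet k
  have hlim : Tendsto (fun n => Φ ((A n).indicator ((truncSet f k).indicator f)) x) atTop
      (𝓝 (Φ ((truncSet f k).indicator f) x)) :=
    Φ.tendsto_apply (fun n => (hf.indicator hBk).indicator (hA.measurableSet n))
      (hf.indicator hBk) ((normBounded_indicator_truncSet k).exists_bound_indicator A)
      (hA.tendsto_indicator _) x
  refine le_of_tendsto' hlim.norm fun n => ?_
  rw [Set.indicator_indicator, Set.inter_comm, ← Set.indicator_indicator,
    ← Φ.map_indicator_one_apply hBk (hf.indicator (hA.measurableSet n)) (hAf n)]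
  exact ((Φ.isStarProjection_indicator_one hBk).norm_apply_le _).trans (hM ⟨n, rfl⟩)

theorem mem_graph_extend_iff_tendsto (hf : Measurable f) (hA : IsExhaustion A)
    (hAf : ∀ n, NormBounded ((A n).indicator f)) {x v : H} :
    (x, v) ∈ (Φ.extend f).graph ↔ Tendsto (fun n => Φ ((A n).indicator f) x) atTop (𝓝 v) := by
  refine ⟨Φ.tendsto_of_mem_graph hf hA hAf, fun hv => ?_⟩
  obtain ⟨w, hw⟩ := LinearPMap.mem_domain_iff.mp
    (Φ.mem_domain_extend_of_bddAbove_indicator hf hA hAf hv.cauchySeq.norm_bddAbove)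
  rwa [tendsto_nhds_unique hv (Φ.tendsto_of_mem_graph hf hA hAf hw)]

theorem mem_graph_extend_iff_forall (hf : Measurable f) {x v : H} :
    (x, v) ∈ (Φ.extend f).graph ↔
      ∀ n, Φ ((truncSet f n).indicator f) x = Φ ((truncSet f n).indicator 1) v := by
  have hB := isExhaustion_truncSet hf
  refine ⟨fun hxv n => ?_, fun h => ?_⟩
  · rw [← Set.indicator_one_mul]
    exact Φ.map_mul_apply_of_mem_graph hf hxv (measurable_one.indicator (hB.measurableSet n))
      (normBounded_indicator_one _)
      (by rw [Set.indicator_one_mul]; exact normBounded_indicator_truncSet n)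
  · rw [Φ.mem_graph_extend_iff]
    simpa only [h] using Φ.tendsto_indicator_one_apply hB v

theorem isClosed_extend (hf : Measurable f) : (Φ.extend f).IsClosed := by
  have hgraph : ((Φ.extend f).graph : Set (H × H)) =
      ⋂ n, {p | Φ ((truncSet f n).indicator f) p.1 = Φ ((truncSet f n).indicator 1) p.2} := by
    ext ⟨x, v⟩
    simp [Φ.mem_graph_extend_iff_forall hf]
  rw [LinearPMap.IsClosed, hgraph]
  exact isClosed_iInter fun n => isClosed_eq (by fun_prop) (by fun_prop)

theorem extend_eq_of_normBounded (hf : Measurable f) (hfb : NormBounded f) :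
    Φ.extend f = (Φ f : H →ₗ[𝕜] H).toPMap ⊤ := by
  refine LinearPMap.eq_of_eq_graph (SetLike.ext fun ⟨x, v⟩ => ?_)
  rw [Φ.mem_graph_extend_iff_tendsto hf isExhaustion_univ (fun _ => by rwa [Set.indicator_univ]),
    LinearPMap.mem_graph_toPMap_top_iff]
  simp only [Set.indicator_univ, tendsto_const_nhds_iff]
  rfl

theorem extend_apply_of_normBounded (hf : Measurable f) (hfb : NormBounded f)
    (x : (Φ.extend f).domain) : Φ.extend f x = Φ f x :=
  (LinearPMap.mem_graph_toPMap_top_iff.mp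
    (Φ.extend_eq_of_normBounded hf hfb ▸ (Φ.extend f).mem_graph x)).symm

theorem mem_graph_extend_add (hf : Measurable f) (hg : Measurable g) {x v w : H}
    (hxv : (x, v) ∈ (Φ.extend f).graph) (hxw : (x, w) ∈ (Φ.extend g).graph) :
    (x, v + w) ∈ (Φ.extend (f + g)).graph := by
  have hA := (isExhaustion_truncSet hf).inter (isExhaustion_truncSet hg)
  have hAf := normBounded_indicator_inter_truncSet_left f g
  have hAg := normBounded_indicator_inter_truncSet_right f g
  rw [Φ.mem_graph_extend_iff_tendsto (hf.add hg) hA fun n => by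
    rw [Set.indicator_add']; exact (hAf n).add (hAg n)]
  simp only [Set.indicator_add']
  simp only [Φ.map_add _ _ (hf.indicator (hA.measurableSet _)) (hAf _)
    (hg.indicator (hA.measurableSet _)) (hAg _), add_apply]
  exact (Φ.tendsto_of_mem_graph hf hA hAf hxv).add (Φ.tendsto_of_mem_graph hg hA hAg hxw)

theorem mem_graph_extend_const_mul (c : 𝕜) (hf : Measurable f) {x v : H}
    (hxv : (x, v) ∈ (Φ.extend f).graph) : (x, c • v) ∈ (Φ.extend fun y => c * f y).graph := by
  have hB := isExhaustion_truncSet hf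
  rw [Φ.mem_graph_extend_iff_tendsto (f := fun y => c * f y) (measurable_const.mul hf) hB fun n =>
    normBounded_indicator_of_le (C := ‖c‖ * n) fun y hy => by
      rw [norm_mul]; exact mul_le_mul_of_nonneg_left hy (norm_nonneg c)]
  have h : ∀ n, (truncSet f n).indicator (fun y => c * f y) =
      fun y => c * (truncSet f n).indicator f y :=
    fun n => funext fun y => Set.indicator_mul_right _ _ _
  simp only [h, Φ.map_const_mul c _ (hf.indicator (hB.measurableSet _))
    (normBounded_indicator_truncSet _), smul_apply]
  exact (Φ.mem_graph_extend_iff.mp hxv).const_smul c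

theorem mem_graph_extend_mul_iff (hf : Measurable f) (hg : Measurable g) {x v w : H}
    (hxw : (x, w) ∈ (Φ.extend g).graph) :
    (w, v) ∈ (Φ.extend f).graph ↔ (x, v) ∈ (Φ.extend (f * g)).graph := by
  have hA := (isExhaustion_truncSet hf).inter (isExhaustion_truncSet (hf.mul hg))
  have hAf := normBounded_indicator_inter_truncSet_left f (f * g)
  have hAfg := normBounded_indicator_inter_truncSet_right f (f * g)
  have hmul : ∀ n, (truncSet f n ∩ truncSet (f * g) n).indicator f * g =
      (truncSet f n ∩ truncSet (f * g) n).indicator (f * g) :=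
    fun n => funext fun y => (Set.indicator_mul_left _ _ _).symm
  have key : ∀ n, Φ ((truncSet f n ∩ truncSet (f * g) n).indicator f) w =
      Φ ((truncSet f n ∩ truncSet (f * g) n).indicator (f * g)) x := fun n => by
    rw [← hmul, Φ.map_mul_apply_of_mem_graph hg hxw (hf.indicator (hA.measurableSet n)) (hAf n)
      (by rw [hmul]; exact hAfg n)]
  rw [Φ.mem_graph_extend_iff_tendsto hf hA hAf, Φ.mem_graph_extend_iff_tendsto (hf.mul hg) hA hAfg]
  simp only [key]

def toMeasFC : MeasFC X 𝕜 H where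
  ap := Φ.extend
  isClosed _ := Φ.isClosed_extend
  mfc1 := by
    rw [Φ.extend_eq_of_normBounded measurable_const (normBounded_const 1), Φ.map_one]
    rfl
  mfc2_add f g hf hg := LinearPMap.add_le_of_mem_graph fun _ _ _ => Φ.mem_graph_extend_add hf hg
  mfc2_smul c f hf := LinearPMap.smul_le_of_mem_graph c fun _ _ => Φ.mem_graph_extend_const_mul c hf
  mfc3_le f g hf hg := LinearPMap.le_of_le_graph fun ⟨_, _⟩ hxv =>
    let ⟨_, hxw, hwv⟩ := LinearPMap.mem_graph_compP_iff.mp hxv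
    (Φ.mem_graph_extend_mul_iff hf hg hxw).mp hwv
  mfc3_dom f g hf hg := by
    ext x
    simp only [Submodule.mem_inf, LinearPMap.mem_domain_iff, LinearPMap.mem_graph_compP_iff]
    constructor
    · rintro ⟨v, w, hxw, hwv⟩
      exact ⟨⟨w, hxw⟩, v, (Φ.mem_graph_extend_mul_iff hf hg hxw).mp hwv⟩
    · rintro ⟨⟨w, hxw⟩, v, hxv⟩
      exact ⟨v, w, hxw, (Φ.mem_graph_extend_mul_iff hf hg hxw).mpr hxv⟩
  mfc4_dom f hf hfb := by
    rw [Φ.extend_eq_of_normBounded hf hfb]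
    rfl
  mfc4_cont f hf hfb := by
    simp only [Φ.extend_apply_of_normBounded hf hfb]
    fun_prop
  mfc4_star f hf hfb := by
    rw [Φ.extend_eq_of_normBounded hf hfb,
      Φ.extend_eq_of_normBounded hf.conj (NormBounded.conj hfb), Φ.map_conj f hf hfb]
    exact ContinuousLinearMap.toPMap_adjoint_eq_adjoint_toPMap_of_dense _ (by simp)
  mfc5 f g hf hg hC hfg x y _ _ := by
    obtain ⟨C, hCf⟩ := id hC
    simp only [Φ.extend_apply_of_normBounded (hf _) ⟨C, hCf _⟩,
      Φ.extend_apply_of_normBounded hg (normBounded_of_tendsto hC hfg)]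
    exact Φ.tendsto_inner f g hf hg hC hfg x y

end BddMeasFC

namespace MeasFC

variable (Ψ : MeasFC X 𝕜 H) {Φ₀ : (X → 𝕜) → (H →L[𝕜] H)} {f h : X → 𝕜}

theorem map_mul_apply_of_mem_graph
    (hΨ : ∀ f, Measurable f → NormBounded f → Ψ.ap f = (Φ₀ f : H →ₗ[𝕜] H).toPMap ⊤)
    (hf : Measurable f) {x z : H} (hxz : (x, z) ∈ (Ψ.ap f).graph) (hh : Measurable h)
    (hhb : NormBounded h) (hhf : NormBounded (h * f)) : Φ₀ (h * f) x = Φ₀ h z := by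
  have hcomp : (x, Φ₀ h z) ∈ ((Ψ.ap h).compP (Ψ.ap f)).graph :=
    LinearPMap.mem_graph_compP_iff.mpr
      ⟨z, hxz, by rw [hΨ h hh hhb]; exact LinearPMap.mem_graph_toPMap_top_iff.mpr rfl⟩
  have hxz' := LinearPMap.le_graph_of_le (Ψ.mfc3_le h f hh hf) hcomp
  rw [hΨ _ (hh.mul hf) hhf] at hxz'
  exact LinearPMap.mem_graph_toPMap_top_iff.mp hxz'

theorem mem_graph_map_apply
    (hΨ : ∀ f, Measurable f → NormBounded f → Ψ.ap f = (Φ₀ f : H →ₗ[𝕜] H).toPMap ⊤)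
    (hf : Measurable f) (hh : Measurable h) (hhb : NormBounded h) (hhf : NormBounded (h * f))
    (x : H) : (Φ₀ h x, Φ₀ (h * f) x) ∈ (Ψ.ap f).graph := by
  rw [mul_comm] at hhf ⊢
  have hdom : x ∈ ((Ψ.ap f).compP (Ψ.ap h)).domain := by
    rw [Ψ.mfc3_dom f h hf hh, hΨ h hh hhb, hΨ _ (hf.mul hh) hhf]
    exact ⟨trivial, trivial⟩
  obtain ⟨v, hxv⟩ := LinearPMap.mem_domain_iff.mp hdom
  obtain ⟨w, hxw, hwv⟩ := LinearPMap.mem_graph_compP_iff.mp hxv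
  have hxv' := LinearPMap.le_graph_of_le (Ψ.mfc3_le f h hf hh) hxv
  rw [hΨ h hh hhb, LinearPMap.mem_graph_toPMap_top_iff] at hxw
  rw [hΨ _ (hf.mul hh) hhf, LinearPMap.mem_graph_toPMap_top_iff] at hxv'
  subst hxw hxv'
  exact hwv

theorem ap_eq_extend (Φ : BddMeasFC X 𝕜 H)
    (hΨ : ∀ f, Measurable f → NormBounded f → Ψ.ap f = (Φ f : H →ₗ[𝕜] H).toPMap ⊤)
    (hf : Measurable f) : Ψ.ap f = Φ.extend f := by
  have hB := isExhaustion_truncSet hf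
  have hm : ∀ n, Measurable ((truncSet f n).indicator (1 : X → 𝕜)) := fun n =>
    measurable_one.indicator (hB.measurableSet n)
  have hbd : ∀ n, NormBounded ((truncSet f n).indicator 1 * f) := fun n => by
    rw [Set.indicator_one_mul]
    exact normBounded_indicator_truncSet n
  refine le_antisymm (LinearPMap.le_of_le_graph fun ⟨x, z⟩ hxz => ?_)
    (LinearPMap.le_of_le_graph fun ⟨x, z⟩ hxz => ?_)
  · refine (Φ.mem_graph_extend_iff_forall hf).mpr fun n => ?_
    rw [← Set.indicator_one_mul]
    exact Ψ.map_mul_apply_of_mem_graph hΨ hf hxz (hm n) (normBounded_indicator_one _) (hbd n)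
  · have hseq : ∀ n, (Φ ((truncSet f n).indicator 1) x, Φ ((truncSet f n).indicator 1) z) ∈
        (Ψ.ap f).graph := fun n => by
      have h := Ψ.mem_graph_map_apply hΨ hf (hm n) (normBounded_indicator_one _) (hbd n) x
      rwa [Set.indicator_one_mul, (Φ.mem_graph_extend_iff_forall hf).mp hxz n] at h
    exact (Ψ.isClosed f hf).mem_of_tendsto ((Φ.tendsto_indicator_one_apply hB x).prodMk_nhds
      (Φ.tendsto_indicator_one_apply hB z)) (Eventually.of_forall hseq)

end MeasFC

/-- Theorem 6.1: a weakly bp-continuous unital `*`-homomorphism on the bounded measurable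
functions extends uniquely to a measurable functional calculus. -/
theorem mfc_extension_from_bounded (Φ₀ : (X → 𝕜) → (H →L[𝕜] H))
    (hone : Φ₀ (fun _ => 1) = 1)
    (hadd : ∀ f g : X → 𝕜, Measurable f → (∃ C, ∀ x, ‖f x‖ ≤ C) →
      Measurable g → (∃ C, ∀ x, ‖g x‖ ≤ C) → Φ₀ (f + g) = Φ₀ f + Φ₀ g)
    (hsmul : ∀ (c : 𝕜) (f : X → 𝕜), Measurable f → (∃ C, ∀ x, ‖f x‖ ≤ C) →
      Φ₀ (fun x => c * f x) = c • Φ₀ f)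
    (hmul : ∀ f g : X → 𝕜, Measurable f → (∃ C, ∀ x, ‖f x‖ ≤ C) →
      Measurable g → (∃ C, ∀ x, ‖g x‖ ≤ C) → Φ₀ (f * g) = Φ₀ f * Φ₀ g)
    (hstar : ∀ f : X → 𝕜, Measurable f → (∃ C, ∀ x, ‖f x‖ ≤ C) →
      Φ₀ (fun x => starRingEnd 𝕜 (f x)) = ContinuousLinearMap.adjoint (Φ₀ f))
    (hbp : ∀ (f : ℕ → X → 𝕜) (g : X → 𝕜), (∀ n, Measurable (f n)) → Measurable g →
      (∃ C, ∀ n x, ‖f n x‖ ≤ C) →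
      (∀ x, Filter.Tendsto (fun n => f n x) Filter.atTop (𝓝 (g x))) →
      ∀ x y : H, Filter.Tendsto (fun n => (inner 𝕜 (Φ₀ (f n) x) y : 𝕜)) Filter.atTop
        (𝓝 (inner 𝕜 (Φ₀ g x) y))) :
    ∃ Φ : MeasFC X 𝕜 H,
      (∀ f : X → 𝕜, Measurable f → (∃ C, ∀ x, ‖f x‖ ≤ C) →
        Φ.ap f = (Φ₀ f : H →ₗ[𝕜] H).toPMap ⊤) ∧
      ∀ Ψ : MeasFC X 𝕜 H,
        (∀ f : X → 𝕜, Measurable f → (∃ C, ∀ x, ‖f x‖ ≤ C) →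
          Ψ.ap f = (Φ₀ f : H →ₗ[𝕜] H).toPMap ⊤) →
        ∀ f : X → 𝕜, Measurable f → Ψ.ap f = Φ.ap f := by
  let Φ : BddMeasFC X 𝕜 H := ⟨Φ₀, hone, hadd, hsmul, hmul, hstar, hbp⟩
  exact ⟨Φ.toMeasFC, fun f hf hfb => Φ.extend_eq_of_normBounded hf hfb,
    fun Ψ hΨ f hf => Ψ.ap_eq_extend Φ hΨ hf⟩
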